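/- arXiv:2409.15001 — 8 statements merged into one kernel-verified Lean document; each statement's English description precedes it below -/
import Mathlib

section
/- If G is a finite simple locally linear graph, then the triangle graph G* of G contains no induced subgraph isomorphic to the diamond K₄ − e (the complete graph on four vertices with one edge deleted). -/
open SimpleGraph Polynomial Matrix

variable {V : Type*}

/-- A finite simple graph is *locally linear* if it has no isolated vertices and
every edge lies in exactly one triangle (3-clique). -/
def IsLocallyLinear (G : SimpleGraph V) : Prop :=
  (∀ v : V, ∃ w : V, G.Adj v w) ∧
    ∀ ⦃x y : V⦄, G.Adj x y → ∃! t : Finset V, G.IsNClique 3 t ∧ x ∈ t ∧ y ∈ t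

/-- The triangle graph `G*` of `G`: its vertices are the triangles (3-cliques) of `G`,
two distinct triangles being adjacent iff they share a common vertex. -/
def TriangleGraph (G : SimpleGraph V) : SimpleGraph {t : Finset V // G.IsNClique 3 t} where
  Adj a b := a ≠ b ∧ ∃ v : V, v ∈ a.1 ∧ v ∈ b.1
  symm := ⟨fun _ _ ⟨h, v, hv1, hv2⟩ => ⟨h.symm, v, hv2, hv1⟩⟩
  loopless := ⟨fun _ ⟨h, _⟩ => h rfl⟩

/-- The diamond `K₄ - e`: the complete graph on four vertices with the edge `01` deleted. -/
def diamondGraph : SimpleGraph (Fin 4) where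
  Adj a b := a ≠ b ∧ ¬(a = 0 ∧ b = 1) ∧ ¬(a = 1 ∧ b = 0)
  symm := ⟨fun _ _ ⟨h1, h2, h3⟩ =>
    ⟨h1.symm, fun ⟨ha, hb⟩ => h3 ⟨hb, ha⟩, fun ⟨ha, hb⟩ => h2 ⟨hb, ha⟩⟩⟩
  loopless := ⟨fun _ ⟨h, _⟩ => h rfl⟩

instance (G : SimpleGraph V) [DecidableEq V] [Fintype V] [DecidableRel G.Adj] :
    Fintype {t : Finset V // G.IsNClique 3 t} := Subtype.fintype _

instance (G : SimpleGraph V) [Fintype V] [DecidableEq V] :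
    DecidableRel (TriangleGraph G).Adj :=
  fun a b => inferInstanceAs (Decidable (a ≠ b ∧ ∃ v : V, v ∈ a.1 ∧ v ∈ b.1))

/-- The set of vertex subsets of `H` inducing a cycle of length `n`. -/
def inducedCycleSets {W : Type*} (H : SimpleGraph W) (n : ℕ) : Set (Set W) :=
  {s : Set W | s.ncard = n ∧ Nonempty (H.induce s ≃g cycleGraph n)}

/-! In a locally linear graph, if two distinct triangles `t`, `u` share a vertex `e`, then every
triangle `s` meeting both contains `e`. Otherwise `s` meets them in vertices `a`, `c` other than
`e`; `a = c` would give `t` and `u` the two common vertices `a`, `e`, while for `a ≠ c` the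
vertices `a`, `c`, `e` span a triangle through the edge `ac` of `s`, which must then be `s`.
In a diamond of `G*` the two nonadjacent triangles both meet the two adjacent ones, so both
contain a common vertex of those, and are adjacent after all. -/

namespace IsLocallyLinear

variable {G : SimpleGraph V} (hG : IsLocallyLinear G)
include hG

theorem eq_of_mem_of_mem {s t : Finset V} {x y : V} (hs : G.IsNClique 3 s)
    (ht : G.IsNClique 3 t) (hxy : x ≠ y) (hxs : x ∈ s) (hys : y ∈ s) (hxt : x ∈ t)
    (hyt : y ∈ t) : s = t :=
  (hG.2 (hs.1 hxs hys hxy)).unique ⟨hs, hxs, hys⟩ ⟨ht, hxt, hyt⟩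

theorem mem_of_adj_of_adj {s : Finset V} {x y z : V} (hs : G.IsNClique 3 s) (hxy : x ≠ y)
    (hxs : x ∈ s) (hys : y ∈ s) (hxz : G.Adj x z) (hyz : G.Adj y z) : z ∈ s := by
  classical
  have hxyz : G.IsNClique 3 {x, y, z} :=
    is3Clique_triple_iff.mpr ⟨hs.1 hxs hys hxy, hxz, hyz⟩
  rw [hG.eq_of_mem_of_mem hs hxyz hxy hxs hys (by simp) (by simp)]
  simp

theorem mem_of_triangleGraph_adj {s t u : {t : Finset V // G.IsNClique 3 t}} {e : V}
    (hst : (TriangleGraph G).Adj s t) (hsu : (TriangleGraph G).Adj s u) (htu : t ≠ u)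
    (het : e ∈ t.1) (heu : e ∈ u.1) : e ∈ s.1 := by
  obtain ⟨-, a, has, hat⟩ := hst
  obtain ⟨-, c, hcs, hcu⟩ := hsu
  by_contra hes
  have hae : a ≠ e := fun h => hes (h ▸ has)
  have hce : c ≠ e := fun h => hes (h ▸ hcs)
  by_cases hac : a = c
  · subst hac
    exact htu (Subtype.ext (hG.eq_of_mem_of_mem t.2 u.2 hae hat het hcu heu))
  · exact hes (hG.mem_of_adj_of_adj s.2 hac has hcs (t.2.1 hat het hae) (u.2.1 hcu heu hce))

end IsLocallyLinear

theorem triangleGraph_diamond_free_general (G : SimpleGraph V)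
    (hG : IsLocallyLinear G) :
    IsEmpty (diamondGraph ↪g TriangleGraph G) := by
  refine ⟨fun f => ?_⟩
  have hadj (i j : Fin 4) (hij : diamondGraph.Adj i j) : (TriangleGraph G).Adj (f i) (f j) :=
    f.map_rel_iff.mpr hij
  obtain ⟨h23, e, he2, he3⟩ := hadj 2 3 ⟨by decide, by decide, by decide⟩
  have he0 := hG.mem_of_triangleGraph_adj (hadj 0 2 ⟨by decide, by decide, by decide⟩)
    (hadj 0 3 ⟨by decide, by decide, by decide⟩) h23 he2 he3
  have he1 := hG.mem_of_triangleGraph_adj (hadj 1 2 ⟨by decide, by decide, by decide⟩)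
    (hadj 1 3 ⟨by decide, by decide, by decide⟩) h23 he2 he3
  have h01 : diamondGraph.Adj 0 1 := f.map_rel_iff.mp ⟨f.injective.ne (by decide), e, he0, he1⟩
  exact h01.2.1 ⟨rfl, rfl⟩

/-- The triangle graph of a finite locally linear graph contains no induced
subgraph isomorphic to the diamond `K₄ - e`. -/
theorem triangleGraph_diamond_free [Fintype V] (G : SimpleGraph V)
    (hG : IsLocallyLinear G) :
    IsEmpty (diamondGraph ↪g TriangleGraph G) :=
  triangleGraph_diamond_free_general G hG
end

section
/- If G is a finite simple locally linear graph, then any two distinct nonadjacent vertices of the triangle graph G* of G have at most three common neighbors in G*. -/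
open SimpleGraph Polynomial Matrix

variable {V : Type*}

/-
Each common neighbour `c` of the disjoint triangles `a` and `b` meets `a` in some vertex `x`
and `b` in some vertex `y`. Two triangles through `x ∉ b` that both meet `b` coincide: if they
meet `b` in the same `y` they share the edge `xy`, and otherwise `x` together with the two
meeting points forms a triangle sharing an edge with `b` and with the first of them, forcing
`x ∈ b`. So `c ↦ x` is injective and there are at most `|a| = 3` common neighbours.
-/

namespace IsLocallyLinear

variable {G : SimpleGraph V}

theorem clique_eq_of_mem_of_mem (hG : IsLocallyLinear G) {s t : Finset V}
    (hs : G.IsNClique 3 s) (ht : G.IsNClique 3 t) {x y : V} (hxy : x ≠ y)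
    (hxs : x ∈ s) (hys : y ∈ s) (hxt : x ∈ t) (hyt : y ∈ t) : s = t :=
  (hG.2 (hs.1 hxs hys hxy)).unique ⟨hs, hxs, hys⟩ ⟨ht, hxt, hyt⟩

theorem clique_eq_of_meet_of_notMem (hG : IsLocallyLinear G) {b c c' : Finset V}
    (hb : G.IsNClique 3 b) (hc : G.IsNClique 3 c) (hc' : G.IsNClique 3 c')
    {x y y' : V} (hxb : x ∉ b) (hxc : x ∈ c) (hxc' : x ∈ c')
    (hyb : y ∈ b) (hyc : y ∈ c) (hy'b : y' ∈ b) (hy'c' : y' ∈ c') : c = c' := by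
  have hxy : x ≠ y := fun h => hxb (h ▸ hyb)
  have hxy' : x ≠ y' := fun h => hxb (h ▸ hy'b)
  by_cases hyy' : y = y'
  · subst hyy'
    exact hG.clique_eq_of_mem_of_mem hc hc' hxy hxc hyc hxc' hy'c'
  · classical
    exfalso
    have hxyy' : G.IsNClique 3 {x, y, y'} := is3Clique_triple_iff.mpr
      ⟨hc.1 hxc hyc hxy, hc'.1 hxc' hy'c' hxy', hb.1 hyb hy'b hyy'⟩
    have hc_eq : c = {x, y, y'} :=
      hG.clique_eq_of_mem_of_mem hc hxyy' hxy hxc hyc (by simp) (by simp)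
    have hcb : c = b :=
      hG.clique_eq_of_mem_of_mem hc hb hyy' hyc (by simp [hc_eq]) hyb hy'b
    exact hxb (hcb ▸ hxc)

end IsLocallyLinear

theorem triangleGraph_commonNeighbors_le_three_general (G : SimpleGraph V)
    (hG : IsLocallyLinear G) (a b : {t : Finset V // G.IsNClique 3 t})
    (hab : a ≠ b) (hna : ¬ (TriangleGraph G).Adj a b) :
    ((TriangleGraph G).commonNeighbors a b).ncard ≤ 3 := by
  have hdisj : ∀ x ∈ a.1, x ∉ b.1 := fun x hxa hxb => hna ⟨hab, x, hxa, hxb⟩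
  have hmeet_a : ∀ c ∈ (TriangleGraph G).commonNeighbors a b, ∃ x ∈ a.1, x ∈ c.1 :=
    fun c hc => ((mem_commonNeighbors _).mp hc).1.2
  have hmeet_b : ∀ c ∈ (TriangleGraph G).commonNeighbors a b, ∃ y ∈ b.1, y ∈ c.1 :=
    fun c hc => ((mem_commonNeighbors _).mp hc).2.2
  obtain ⟨x₀, -⟩ : a.1.Nonempty := Finset.card_pos.mp (by rw [a.2.2]; norm_num)
  have : Nonempty V := ⟨x₀⟩
  choose! f hfa hfc using hmeet_a
  calc ((TriangleGraph G).commonNeighbors a b).ncard ≤ (a.1 : Set V).ncard := by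
        refine Set.ncard_le_ncard_of_injOn f hfa fun c hc c' hc' hcc' => Subtype.ext ?_
        obtain ⟨y, hyb, hyc⟩ := hmeet_b c hc
        obtain ⟨y', hy'b, hy'c'⟩ := hmeet_b c' hc'
        exact hG.clique_eq_of_meet_of_notMem b.2 c.2 c'.2 (hdisj _ (hfa c' hc'))
          (hcc' ▸ hfc c hc) (hfc c' hc') hyb hyc hy'b hy'c'
    _ = 3 := by rw [Set.ncard_coe_finset, a.2.2]

/-- Any two distinct nonadjacent vertices of the triangle graph of a finite
locally linear graph have at most three common neighbors. -/
theorem triangleGraph_commonNeighbors_le_three [Fintype V] (G : SimpleGraph V)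
    (hG : IsLocallyLinear G) (a b : {t : Finset V // G.IsNClique 3 t})
    (hab : a ≠ b) (hna : ¬ (TriangleGraph G).Adj a b) :
    ((TriangleGraph G).commonNeighbors a b).ncard ≤ 3 :=
  triangleGraph_commonNeighbors_le_three_general G hG a b hab hna
end

section
/- If G is a finite simple locally linear graph, then the number of quadrilaterals (induced 4-cycles) in G equals the number of quadrilaterals (induced 4-cycles) in the triangle graph G* of G. -/
open SimpleGraph Polynomial Matrix

variable {V : Type*}

/-! Regard the vertices and the triangles of a locally linear graph `G` as points and lines.
Two points lie on at most one line, and every triangle of the collinearity graph lies on a line;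
both properties pass to the dual structure, whose collinearity graph is `G*`. The secants (lines
through two points) of an induced square `a b c d` of `G` are `ab, bc, cd, da`, and they form an
induced square of `G*`: opposite lines are disjoint, since a common point `v` of `ab` and `cd`
would put `a, v, d` on one line, forcing `ab = cd`. The points on two of these lines are exactly
`a, b, c, d`, so taking secants in the dual undoes taking secants, and by duality it is a
bijection between the two families of squares. -/

theorem range_fin_four {W : Type*} (x : Fin 4 → W) : Set.range x = {x 0, x 1, x 2, x 3} := by
  ext
  simp [Fin.exists_fin_succ, eq_comm]

namespace SimpleGraph

variable {W : Type*} {H : SimpleGraph W}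

structure IsSquare (H : SimpleGraph W) (a b c d : W) : Prop where
  adj_ab : H.Adj a b
  adj_bc : H.Adj b c
  adj_cd : H.Adj c d
  adj_da : H.Adj d a
  ne_ac : a ≠ c
  ne_bd : b ≠ d
  not_adj_ac : ¬H.Adj a c
  not_adj_bd : ¬H.Adj b d

theorem IsSquare.rotate {a b c d : W} (h : H.IsSquare a b c d) : H.IsSquare b c d a :=
  ⟨h.adj_bc, h.adj_cd, h.adj_da, h.adj_ab, h.ne_bd, h.ne_ac.symm,
    h.not_adj_bd, fun h' => h.not_adj_ac h'.symm⟩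

theorem IsSquare.exists_embedding {a b c d : W} (h : H.IsSquare a b c d) :
    ∃ e : cycleGraph 4 ↪g H, Set.range e = {a, b, c, d} := by
  have hca : ¬H.Adj c a := fun h' => h.not_adj_ac h'.symm
  have hdb : ¬H.Adj d b := fun h' => h.not_adj_bd h'.symm
  have hinj : Function.Injective ![a, b, c, d] := by
    intro i j
    fin_cases i <;> fin_cases j <;>
      simp [h.ne_ac, h.ne_bd, h.ne_ac.symm, h.ne_bd.symm, h.adj_ab.ne, h.adj_bc.ne, h.adj_cd.ne,
        h.adj_da.ne, h.adj_ab.ne.symm, h.adj_bc.ne.symm, h.adj_cd.ne.symm, h.adj_da.ne.symm]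
  refine ⟨⟨⟨_, hinj⟩, fun {i j} => ?_⟩, range_fin_four _⟩
  fin_cases i <;> fin_cases j <;>
    simp [h.adj_ab, h.adj_bc, h.adj_cd, h.adj_da, h.adj_ab.symm, h.adj_bc.symm, h.adj_cd.symm,
      h.adj_da.symm, h.not_adj_ac, h.not_adj_bd, hca, hdb] <;> decide

theorem Embedding.isSquare (e : cycleGraph 4 ↪g H) : H.IsSquare (e 0) (e 1) (e 2) (e 3) :=
  ⟨e.map_adj_iff.2 (by decide), e.map_adj_iff.2 (by decide), e.map_adj_iff.2 (by decide),
    e.map_adj_iff.2 (by decide), e.injective.ne (by decide), e.injective.ne (by decide),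
    e.map_adj_iff.not.2 (by decide), e.map_adj_iff.not.2 (by decide)⟩

theorem mem_inducedCycleSets_iff {n : ℕ} {s : Set W} :
    s ∈ inducedCycleSets H n ↔ ∃ e : cycleGraph n ↪g H, Set.range e = s := by
  constructor
  · rintro ⟨-, ⟨φ⟩⟩
    refine ⟨(Embedding.induce s).comp φ.symm.toEmbedding, ?_⟩
    have hsurj : Set.range φ.symm.toEmbedding = Set.univ := φ.symm.surjective.range_eq
    rw [Embedding.coe_comp, Set.range_comp, hsurj, Set.image_univ]
    exact Subtype.range_coe
  · rintro ⟨e, rfl⟩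
    exact ⟨by rw [Set.ncard_range_of_injective e.injective, Nat.card_fin], ⟨e.isoInduceRange.symm⟩⟩

theorem mem_inducedCycleSets_four_iff {s : Set W} :
    s ∈ inducedCycleSets H 4 ↔ ∃ a b c d, H.IsSquare a b c d ∧ s = {a, b, c, d} := by
  rw [mem_inducedCycleSets_iff]
  constructor
  · rintro ⟨e, rfl⟩
    exact ⟨_, _, _, _, e.isSquare, range_fin_four e⟩
  · rintro ⟨a, b, c, d, h, rfl⟩
    exact h.exists_embedding

end SimpleGraph

section Incidence

variable {P L : Type*}

def collinearityGraph (I : P → L → Prop) : SimpleGraph P where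
  Adj p q := p ≠ q ∧ ∃ l, I p l ∧ I q l
  symm := ⟨fun _ _ ⟨hne, l, hp, hq⟩ => ⟨hne.symm, l, hq, hp⟩⟩
  loopless := ⟨fun _ h => h.1 rfl⟩

@[simp]
theorem collinearityGraph_adj {I : P → L → Prop} {p q : P} :
    (collinearityGraph I).Adj p q ↔ p ≠ q ∧ ∃ l, I p l ∧ I q l :=
  Iff.rfl

def secants (I : P → L → Prop) (s : Set P) : Set L :=
  {l | ∃ p ∈ s, ∃ q ∈ s, p ≠ q ∧ I p l ∧ I q l}

structure IsLinearIncidence (I : P → L → Prop) : Prop where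
  eq_of_incident : ∀ ⦃p q l m⦄, p ≠ q → I p l → I q l → I p m → I q m → l = m
  exists_incident_of_triangle : ∀ ⦃p q r⦄, (collinearityGraph I).Adj p q →
    (collinearityGraph I).Adj q r → (collinearityGraph I).Adj p r → ∃ l, I p l ∧ I q l ∧ I r l

theorem SimpleGraph.IsSquare.ne_of_incident {I : P → L → Prop} {a b c d : P} {l m : L}
    (h : (collinearityGraph I).IsSquare a b c d) (hal : I a l) (hcm : I c m) : l ≠ m := by
  rintro rfl
  exact h.not_adj_ac ⟨h.ne_ac, l, hal, hcm⟩

namespace IsLinearIncidence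

variable {I : P → L → Prop} (hI : IsLinearIncidence I)
include hI

/-- Three pairwise concurrent lines pass through one point: otherwise their three intersection
points would form a triangle, whose line would coincide with all three lines. -/
protected theorem flip : IsLinearIncidence (flip I) := by
  refine ⟨fun l m p q hlm hlp hmp hlq hmq =>
    of_not_not fun hpq => hlm (hI.eq_of_incident hpq hlp hlq hmp hmq), ?_⟩
  simp only [collinearityGraph_adj]
  rintro l₁ l₂ l₃ ⟨h₁₂, p₁₂, hp₁₂, hp₁₂'⟩ ⟨-, p₂₃, hp₂₃, hp₂₃'⟩ ⟨-, p₁₃, hp₁₃, hp₁₃'⟩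
  by_cases h₁ : p₁₂ = p₁₃
  · exact ⟨p₁₂, hp₁₂, hp₁₂', h₁ ▸ hp₁₃'⟩
  by_cases h₂ : p₁₂ = p₂₃
  · exact ⟨p₁₂, hp₁₂, hp₁₂', h₂ ▸ hp₂₃'⟩
  by_cases h₃ : p₁₃ = p₂₃
  · exact ⟨p₁₃, hp₁₃, h₃ ▸ hp₂₃, hp₁₃'⟩
  obtain ⟨m, hm₁₂, hm₂₃, hm₁₃⟩ := hI.exists_incident_of_triangle ⟨h₂, l₂, hp₁₂', hp₂₃⟩
    ⟨Ne.symm h₃, l₃, hp₂₃', hp₁₃'⟩ ⟨h₁, l₁, hp₁₂, hp₁₃⟩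
  exact absurd ((hI.eq_of_incident h₁ hm₁₂ hm₁₃ hp₁₂ hp₁₃).symm.trans
    (hI.eq_of_incident h₂ hm₁₂ hm₂₃ hp₁₂' hp₂₃)) h₁₂

variable {a b c d : P} {lab lbc lcd lda : L}

theorem not_incident_of_isSquare (h : (collinearityGraph I).IsSquare a b c d) (hal : I a lab)
    (hbl : I b lab) (hcm : I c lcd) (hdm : I d lcd) {v : P} (hvl : I v lab) : ¬I v lcd := by
  intro hvm
  by_cases hva : v = a
  · subst hva
    exact h.not_adj_ac ⟨h.ne_ac, lcd, hvm, hcm⟩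
  by_cases hvd : v = d
  · subst hvd
    exact h.not_adj_bd ⟨h.ne_bd, lab, hbl, hvl⟩
  obtain ⟨n, han, hvn, hdn⟩ := hI.exists_incident_of_triangle (q := v)
    ⟨Ne.symm hva, lab, hal, hvl⟩ ⟨hvd, lcd, hvm, hdm⟩ h.adj_da.symm
  have hlm : lab = lcd := (hI.eq_of_incident (Ne.symm hva) hal hvl han hvn).trans
    (hI.eq_of_incident hvd hvn hdn hvm hdm)
  exact h.not_adj_ac ⟨h.ne_ac, lcd, hlm ▸ hal, hcm⟩

section SideLines

variable (hab : I a lab) (hbab : I b lab) (hbc : I b lbc) (hcbc : I c lbc) (hccd : I c lcd)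
  (hdcd : I d lcd) (hdda : I d lda) (hada : I a lda)
include hab hbab hbc hcbc hccd hdcd hdda hada

theorem isSquare_flip (h : (collinearityGraph I).IsSquare a b c d) :
    (collinearityGraph (flip I)).IsSquare lab lbc lcd lda where
  adj_ab := ⟨h.ne_of_incident hab hcbc, b, hbab, hbc⟩
  adj_bc := ⟨h.rotate.ne_of_incident hbc hdcd, c, hcbc, hccd⟩
  adj_cd := ⟨h.rotate.rotate.ne_of_incident hccd hada, d, hdcd, hdda⟩
  adj_da := ⟨h.rotate.rotate.rotate.ne_of_incident hdda hbab, a, hada, hab⟩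
  ne_ac := fun e => hI.not_incident_of_isSquare h hab hbab hccd hdcd hbab (e ▸ hbab)
  ne_bd := fun e => hI.not_incident_of_isSquare h.rotate hbc hcbc hdda hada hcbc (e ▸ hcbc)
  not_adj_ac := fun ⟨_, _, hv, hv'⟩ => hI.not_incident_of_isSquare h hab hbab hccd hdcd hv hv'
  not_adj_bd := fun ⟨_, _, hv, hv'⟩ =>
    hI.not_incident_of_isSquare h.rotate hbc hcbc hdda hada hv hv'

theorem secants_eq (h : (collinearityGraph I).IsSquare a b c d) :
    secants I {a, b, c, d} = {lab, lbc, lcd, lda} := by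
  ext l
  simp only [secants, Set.mem_insert_iff, Set.mem_singleton_iff]
  constructor
  · rintro ⟨p, hp, q, hq, hpq, hpl, hql⟩
    have hcol : (collinearityGraph I).Adj p q := ⟨hpq, l, hpl, hql⟩
    have key : ∀ {n}, I p n → I q n → l = n := hI.eq_of_incident hpq hpl hql
    rcases hp with rfl | rfl | rfl | rfl <;> rcases hq with rfl | rfl | rfl | rfl <;>
      first
      | exact absurd rfl hpq
      | exact absurd hcol h.not_adj_ac
      | exact absurd hcol.symm h.not_adj_ac
      | exact absurd hcol h.not_adj_bd
      | exact absurd hcol.symm h.not_adj_bd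
      | exact Or.inl (key ‹_› ‹_›)
      | exact Or.inr <| Or.inl (key ‹_› ‹_›)
      | exact Or.inr <| Or.inr <| Or.inl (key ‹_› ‹_›)
      | exact Or.inr <| Or.inr <| Or.inr (key ‹_› ‹_›)
  · rintro (rfl | rfl | rfl | rfl)
    · exact ⟨a, by simp, b, by simp, h.adj_ab.ne, hab, hbab⟩
    · exact ⟨b, by simp, c, by simp, h.adj_bc.ne, hbc, hcbc⟩
    · exact ⟨c, by simp, d, by simp, h.adj_cd.ne, hccd, hdcd⟩
    · exact ⟨d, by simp, a, by simp, h.adj_da.ne, hdda, hada⟩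

end SideLines

theorem exists_isSquare_secants (h : (collinearityGraph I).IsSquare a b c d) :
    ∃ lab lbc lcd lda, (collinearityGraph (flip I)).IsSquare lab lbc lcd lda ∧
      secants I {a, b, c, d} = {lab, lbc, lcd, lda} ∧
      secants (flip I) {lab, lbc, lcd, lda} = {a, b, c, d} := by
  obtain ⟨-, lab, hab, hbab⟩ := h.adj_ab
  obtain ⟨-, lbc, hbc, hcbc⟩ := h.adj_bc
  obtain ⟨-, lcd, hccd, hdcd⟩ := h.adj_cd
  obtain ⟨-, lda, hdda, hada⟩ := h.adj_da
  have hflip := hI.isSquare_flip hab hbab hbc hcbc hccd hdcd hdda hada h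
  refine ⟨lab, lbc, lcd, lda, hflip, hI.secants_eq hab hbab hbc hcbc hccd hdcd hdda hada h, ?_⟩
  rw [hI.flip.secants_eq hbab hbc hcbc hccd hdcd hdda hada hab hflip]
  ext
  simp only [Set.mem_insert_iff, Set.mem_singleton_iff]
  tauto

theorem secants_mapsTo :
    Set.MapsTo (secants I) (inducedCycleSets (collinearityGraph I) 4)
      (inducedCycleSets (collinearityGraph (flip I)) 4) := by
  intro s hs
  obtain ⟨a, b, c, d, h, rfl⟩ := mem_inducedCycleSets_four_iff.1 hs
  obtain ⟨lab, lbc, lcd, lda, hflip, hsec, -⟩ := hI.exists_isSquare_secants h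
  exact mem_inducedCycleSets_four_iff.2 ⟨lab, lbc, lcd, lda, hflip, hsec⟩

theorem secants_leftInvOn :
    Set.LeftInvOn (secants (flip I)) (secants I) (inducedCycleSets (collinearityGraph I) 4) := by
  intro s hs
  obtain ⟨a, b, c, d, h, rfl⟩ := mem_inducedCycleSets_four_iff.1 hs
  obtain ⟨_, _, _, _, -, hsec, hsec'⟩ := hI.exists_isSquare_secants h
  rw [hsec, hsec']

theorem ncard_inducedCycleSets_four_eq :
    (inducedCycleSets (collinearityGraph I) 4).ncard =
      (inducedCycleSets (collinearityGraph (flip I)) 4).ncard :=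
  (Set.InvOn.bijOn ⟨hI.secants_leftInvOn, hI.flip.secants_leftInvOn⟩ hI.secants_mapsTo
    hI.flip.secants_mapsTo).ncard_eq

end IsLinearIncidence

end Incidence
def triangleIncidence (G : SimpleGraph V) (v : V) (t : {t : Finset V // G.IsNClique 3 t}) : Prop :=
  v ∈ t.1

theorem collinearityGraph_flip_triangleIncidence (G : SimpleGraph V) :
    collinearityGraph (flip (triangleIncidence G)) = TriangleGraph G :=
  rfl

namespace IsLocallyLinear

variable {G : SimpleGraph V} (hG : IsLocallyLinear G)
include hG

theorem collinearityGraph_triangleIncidence : collinearityGraph (triangleIncidence G) = G := by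
  ext x y
  constructor
  · rintro ⟨hxy, t, hx, hy⟩
    exact t.2.isClique hx hy hxy
  · intro hxy
    obtain ⟨t, ⟨ht, hx, hy⟩, -⟩ := hG.2 hxy
    exact ⟨hxy.ne, ⟨t, ht⟩, hx, hy⟩

theorem isLinearIncidence_triangleIncidence : IsLinearIncidence (triangleIncidence G) where
  eq_of_incident p q t t' hpq hpt hqt hpt' hqt' :=
    Subtype.ext <| (hG.2 (t.2.isClique hpt hqt hpq)).unique ⟨t.2, hpt, hqt⟩ ⟨t'.2, hpt', hqt'⟩
  exists_incident_of_triangle p q r hpq hqr hpr := by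
    classical
    rw [hG.collinearityGraph_triangleIncidence] at hpq hqr hpr
    exact ⟨⟨{p, q, r}, is3Clique_triple_iff.2 ⟨hpq, hpr, hqr⟩⟩, by simp [triangleIncidence],
      by simp [triangleIncidence], by simp [triangleIncidence]⟩

end IsLocallyLinear

theorem card_quadrilaterals_eq_general (G : SimpleGraph V)
    (hG : IsLocallyLinear G) :
    (inducedCycleSets G 4).ncard = (inducedCycleSets (TriangleGraph G) 4).ncard := by
  have h := hG.isLinearIncidence_triangleIncidence.ncard_inducedCycleSets_four_eq
  rwa [hG.collinearityGraph_triangleIncidence, collinearityGraph_flip_triangleIncidence] at h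

/-- A finite locally linear graph has the same number of quadrilaterals
(induced 4-cycles) as its triangle graph. -/
theorem card_quadrilaterals_eq [Fintype V] (G : SimpleGraph V)
    (hG : IsLocallyLinear G) :
    (inducedCycleSets G 4).ncard = (inducedCycleSets (TriangleGraph G) 4).ncard :=
  card_quadrilaterals_eq_general G hG
end

section
/- Let G be a finite simple locally linear graph on n vertices with m triangles, let A be the adjacency matrix of G, D the diagonal matrix of vertex degrees of G, and A* the adjacency matrix of the triangle graph G*. Then, as an identity of polynomials over ℚ, (x+3)^n · P_{A*}(x) = (x+3)^m · P_{A + (1/2)D}(x+3), where P_M denotes the characteristic polynomial of the matrix M. -/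
open SimpleGraph Polynomial Matrix

variable {V : Type*}

/-!
Let `N` be the vertex–triangle incidence matrix of `G`. In a locally linear graph two distinct
triangles share at most one vertex, every edge lies in exactly one triangle, and a vertex of
degree `d` lies in `d / 2` triangles; hence `Nᵀ N = A* + 3 I` and `N Nᵀ = A + D / 2`.
The identity is then Sylvester's `X ^ m · χ(N Nᵀ) = X ^ n · χ(Nᵀ N)`, shifted by `3`.
-/

open Finset

section Incidence

variable {ι : Type*} (R : Type*) [DecidableEq V] [NonAssocSemiring R]

def incidenceMatrix (F : ι → Finset V) : Matrix V ι R :=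
  of fun v i => if v ∈ F i then 1 else 0

lemma transpose_incidenceMatrix_mul_self [Fintype V] (F : ι → Finset V) :
    (incidenceMatrix R F)ᵀ * incidenceMatrix R F = of fun i j => (#(F i ∩ F j) : R) := by
  ext i j
  simp only [incidenceMatrix, Matrix.mul_apply, transpose_apply, of_apply, mul_boole, ← ite_and,
    sum_boole]
  congr 2
  ext
  simp [and_comm]

lemma incidenceMatrix_mul_transpose_self [Fintype ι] (F : ι → Finset V) :
    incidenceMatrix R F * (incidenceMatrix R F)ᵀ =
      of fun u v => (#{i | u ∈ F i ∧ v ∈ F i} : R) := by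
  ext u v
  simp [incidenceMatrix, Matrix.mul_apply, ← ite_and, and_comm]

end Incidence

abbrev triangleIncidenceMatrix (R : Type*) [NonAssocSemiring R] [DecidableEq V]
    (G : SimpleGraph V) : Matrix V {t : Finset V // G.IsNClique 3 t} R :=
  incidenceMatrix R Subtype.val

namespace IsLocallyLinear

variable [DecidableEq V] {G : SimpleGraph V}

lemma card_inter_le_one (hG : IsLocallyLinear G) {s t : Finset V} (hs : G.IsNClique 3 s)
    (ht : G.IsNClique 3 t) (hst : s ≠ t) : #(s ∩ t) ≤ 1 := by
  by_contra! h
  obtain ⟨u, hu, v, hv, huv⟩ := one_lt_card.mp h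
  rw [mem_inter] at hu hv
  obtain ⟨_, -, huniq⟩ := hG.2 (hs.1 hu.1 hv.1 huv)
  exact hst ((huniq s ⟨hs, hu.1, hv.1⟩).trans (huniq t ⟨ht, hu.2, hv.2⟩).symm)

variable [Fintype V]

lemma card_inter_eq_ite (hG : IsLocallyLinear G) {s t : {t : Finset V // G.IsNClique 3 t}}
    (hst : s ≠ t) : #(s.1 ∩ t.1) = if (TriangleGraph G).Adj s t then 1 else 0 := by
  split_ifs with hadj
  · obtain ⟨-, v, hvs, hvt⟩ := hadj
    exact (hG.card_inter_le_one s.2 t.2 (Subtype.coe_ne_coe.mpr hst)).antisymm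
      (card_pos.mpr ⟨v, mem_inter.mpr ⟨hvs, hvt⟩⟩)
  · rw [card_eq_zero, eq_empty_iff_forall_notMem]
    exact fun v hv => hadj ⟨hst, v, (mem_inter.mp hv).1, (mem_inter.mp hv).2⟩

variable [DecidableRel G.Adj]

lemma card_triangles_mem_mem (hG : IsLocallyLinear G) {u v : V} (huv : u ≠ v) :
    #{t : {t : Finset V // G.IsNClique 3 t} | u ∈ t.1 ∧ v ∈ t.1} =
      if G.Adj u v then 1 else 0 := by
  split_ifs with hadj
  · obtain ⟨t, ht, huniq⟩ := hG.2 hadj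
    refine card_eq_one.mpr ⟨⟨t, ht.1⟩, ?_⟩
    ext s
    simp only [mem_filter, mem_univ, true_and, mem_singleton, Subtype.ext_iff]
    exact ⟨fun hs => huniq s.1 ⟨s.2, hs⟩, fun hs => hs ▸ ht.2⟩
  · rw [card_eq_zero, filter_eq_empty_iff]
    exact fun t _ ⟨hu, hv⟩ => hadj (t.2.1 hu hv huv)

lemma card_triangles_mem_mul_two (hG : IsLocallyLinear G) (u : V) :
    #{t : {t : Finset V // G.IsNClique 3 t} | u ∈ t.1} * 2 = G.degree u := by
  have hcount := card_mul_eq_card_mul (fun t w => w ∈ t.1) (m := 2) (n := 1)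
    (s := {t : {t : Finset V // G.IsNClique 3 t} | u ∈ t.1}) (t := G.neighborFinset u) ?_ ?_
  · simpa using hcount
  · intro t ht
    replace ht : u ∈ t.1 := by simpa using ht
    have : (G.neighborFinset u).bipartiteAbove (fun t w => w ∈ t.1) t = t.1.erase u := by
      ext w
      simp only [bipartiteAbove, mem_filter, mem_neighborFinset, mem_erase]
      exact ⟨fun ⟨hw, hwt⟩ => ⟨hw.ne', hwt⟩,
        fun ⟨hw, hwt⟩ => ⟨t.2.1 ht hwt hw.symm, hwt⟩⟩
    rw [this, card_erase_of_mem ht, t.2.card_eq]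
  · intro w hw
    rw [mem_neighborFinset] at hw
    rw [bipartiteBelow, filter_filter, hG.card_triangles_mem_mem hw.ne, if_pos hw]

lemma transpose_triangleIncidenceMatrix_mul_self {R : Type*} [Semiring R]
    (hG : IsLocallyLinear G) :
    (triangleIncidenceMatrix R G)ᵀ * triangleIncidenceMatrix R G =
      (TriangleGraph G).adjMatrix R + scalar _ (3 : R) := by
  rw [transpose_incidenceMatrix_mul_self]
  ext s t
  by_cases hst : s = t
  · subst hst
    simp [s.2.card_eq]
  · simp [hst, hG.card_inter_eq_ite hst]

lemma triangleIncidenceMatrix_mul_transpose_self {K : Type*} [Field K] [CharZero K]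
    (hG : IsLocallyLinear G) :
    triangleIncidenceMatrix K G * (triangleIncidenceMatrix K G)ᵀ =
      G.adjMatrix K + (1 / 2 : K) • diagonal fun v => (G.degree v : K) := by
  rw [incidenceMatrix_mul_transpose_self]
  ext u v
  by_cases huv : u = v
  · subst huv
    simp [← hG.card_triangles_mem_mul_two u]
    ring
  · simp [huv, hG.card_triangles_mem_mem huv]

end IsLocallyLinear

/-- For a finite locally linear graph `G` on `n` vertices with `m` triangles,
`(x+3)^n ⬝ P_{A*}(x) = (x+3)^m ⬝ P_{A + D/2}(x+3)`. -/
theorem charpoly_triangleGraph [Fintype V] [DecidableEq V] (G : SimpleGraph V)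
    [DecidableRel G.Adj] (hG : IsLocallyLinear G) :
    (X + C 3) ^ (Fintype.card V) * ((TriangleGraph G).adjMatrix ℚ).charpoly =
      (X + C 3) ^ (Nat.card {t : Finset V // G.IsNClique 3 t}) *
        ((G.adjMatrix ℚ +
          (1/2 : ℚ) • Matrix.diagonal fun v => (G.degree v : ℚ)).charpoly.comp
            (X + C 3)) := by
  set N := triangleIncidenceMatrix ℚ G
  have hA : (TriangleGraph G).adjMatrix ℚ = Nᵀ * N - scalar _ 3 := by
    rw [hG.transpose_triangleIncidenceMatrix_mul_self, add_sub_cancel_right]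
  rw [hA, charpoly_sub_scalar, ← hG.triangleIncidenceMatrix_mul_transpose_self,
    Nat.card_eq_fintype_card]
  have sylvester := congrArg (·.comp (X + C 3)) (charpoly_mul_comm' N Nᵀ)
  simp only [mul_comp, pow_comp, X_comp] at sylvester
  exact sylvester.symm
end

section
/- Let G be a finite simple locally linear graph on n vertices with m triangles that is regular of degree k, let A be the adjacency matrix of G and A* the adjacency matrix of the triangle graph G*. Then, as an identity of polynomials over ℚ, (x+3)^n · P_{A*}(x) = (x+3)^m · P_A(x + 3 − k/2), where P_M denotes the characteristic polynomial of the matrix M. -/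
open SimpleGraph Polynomial Matrix

variable {V : Type*}

/-! Let `B` be the vertex–triangle incidence matrix of `G`. Since every edge lies in exactly one
triangle, `B Bᵀ = D + A` where `D` is the diagonal matrix counting the triangles through each
vertex (`k / 2` of them when `G` is `k`-regular), and `Bᵀ B = 3 I + A*` because two distinct
triangles share at most one vertex. The rectangular identity
`X ^ m · χ(B Bᵀ) = X ^ n · χ(Bᵀ B)`, composed with `X + 3`, is then the theorem. -/

open Finset

section TriangleIncidence

variable (R : Type*) [DecidableEq V] (G : SimpleGraph V)

def triangleIncMatrix [Zero R] [One R] : Matrix V {t : Finset V // G.IsNClique 3 t} R :=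
  of fun v t => if v ∈ t.1 then 1 else 0

variable {R G} [Fintype V]

theorem IsLocallyLinear.card_inter_triangles (hG : IsLocallyLinear G)
    {s t : {t : Finset V // G.IsNClique 3 t}} (hst : s ≠ t) :
    #(s.1 ∩ t.1) = if (TriangleGraph G).Adj s t then 1 else 0 := by
  have hle : #(s.1 ∩ t.1) ≤ 1 := by
    refine card_le_one.mpr fun u hu w hw => by_contra fun huw => hst (Subtype.ext ?_)
    rw [mem_inter] at hu hw
    exact (hG.2 (s.2.1 hu.1 hw.1 huw)).unique ⟨s.2, hu.1, hw.1⟩ ⟨t.2, hu.2, hw.2⟩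
  have hpos : 0 < #(s.1 ∩ t.1) ↔ (TriangleGraph G).Adj s t := by
    simp [card_pos, Finset.Nonempty, TriangleGraph, hst]
  split_ifs with hadj
  · exact le_antisymm hle (hpos.mpr hadj)
  · exact Nat.eq_zero_of_not_pos (mt hpos.mp hadj)

variable [NonAssocSemiring R]

theorem transpose_mul_triangleIncMatrix_apply (s t : {t : Finset V // G.IsNClique 3 t}) :
    ((triangleIncMatrix R G)ᵀ * triangleIncMatrix R G) s t = #(s.1 ∩ t.1) := by
  simp only [triangleIncMatrix, mul_apply, transpose_apply, of_apply, mul_boole, ← ite_and,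
    sum_boole]
  congr 2
  ext v
  simp [and_comm]

theorem IsLocallyLinear.transpose_mul_triangleIncMatrix (hG : IsLocallyLinear G) :
    (triangleIncMatrix R G)ᵀ * triangleIncMatrix R G =
      diagonal (fun _ => (3 : R)) + (TriangleGraph G).adjMatrix R := by
  ext s t
  rw [transpose_mul_triangleIncMatrix_apply]
  obtain rfl | hst := eq_or_ne s t
  · simp [s.2.2]
  · simp [hG.card_inter_triangles hst, hst, apply_ite (Nat.cast : ℕ → R)]

variable [DecidableRel G.Adj]

/-- The triangles through `v` partition its neighbourhood into pairs. -/
theorem IsLocallyLinear.two_mul_card_triangles_mem_eq_degree (hG : IsLocallyLinear G) (v : V) :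
    2 * #{t : {t : Finset V // G.IsNClique 3 t} | v ∈ t.1} = G.degree v := by
  set T := ({t : {t : Finset V // G.IsNClique 3 t} | v ∈ t.1} : Finset _)
  have hnbr : G.neighborFinset v = T.biUnion fun t => t.1.erase v := by
    ext w
    simp only [mem_neighborFinset, mem_biUnion, mem_erase, T, mem_filter, mem_univ, true_and]
    constructor
    · intro hvw
      obtain ⟨t, ht, hvt, hwt⟩ := (hG.2 hvw).exists
      exact ⟨⟨t, ht⟩, hvt, hvw.ne.symm, hwt⟩
    · rintro ⟨t, hvt, hwv, hwt⟩
      exact t.2.1 hvt hwt hwv.symm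
  have hdisj : (T : Set {t : Finset V // G.IsNClique 3 t}).PairwiseDisjoint
      fun t => t.1.erase v := by
    intro s hs t ht hst
    refine disjoint_left.mpr fun w hws hwt => hst (Subtype.ext ?_)
    simp only [T, mem_coe, mem_filter, mem_univ, true_and] at hs ht
    rw [mem_erase] at hws hwt
    exact (hG.2 (s.2.1 hs hws.2 hws.1.symm)).unique ⟨s.2, hs, hws.2⟩ ⟨t.2, ht, hwt.2⟩
  rw [← card_neighborFinset_eq_degree, hnbr, card_biUnion hdisj, mul_comm,
    ← smul_eq_mul, ← sum_const]
  refine sum_congr rfl fun t ht => ?_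
  rw [card_erase_of_mem (mem_filter.mp ht).2, t.2.2]

theorem IsLocallyLinear.card_triangles_mem_mem_s7 (hG : IsLocallyLinear G) {u w : V}
    (huw : u ≠ w) :
    #{t : {t : Finset V // G.IsNClique 3 t} | u ∈ t.1 ∧ w ∈ t.1} =
      if G.Adj u w then 1 else 0 := by
  split_ifs with hadj
  · obtain ⟨t, ht, huniq⟩ := hG.2 hadj
    refine card_eq_one.mpr ⟨⟨t, ht.1⟩, eq_singleton_iff_unique_mem.mpr ⟨?_, ?_⟩⟩
    · simp [ht.2]
    · intro s hs
      exact Subtype.ext (huniq s.1 ⟨s.2, (mem_filter.mp hs).2⟩)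
  · refine card_eq_zero.mpr (filter_eq_empty_iff.mpr fun t _ ⟨hu, hw⟩ => hadj ?_)
    exact t.2.1 hu hw huw

theorem triangleIncMatrix_mul_transpose_apply (u w : V) :
    (triangleIncMatrix R G * (triangleIncMatrix R G)ᵀ) u w =
      #{t : {t : Finset V // G.IsNClique 3 t} | u ∈ t.1 ∧ w ∈ t.1} := by
  simp [triangleIncMatrix, mul_apply, ← ite_and, sum_boole, and_comm]

theorem IsLocallyLinear.triangleIncMatrix_mul_transpose (hG : IsLocallyLinear G) :
    triangleIncMatrix R G * (triangleIncMatrix R G)ᵀ =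
      diagonal (fun v => (#{t : {t : Finset V // G.IsNClique 3 t} | v ∈ t.1} : R)) +
        G.adjMatrix R := by
  ext u w
  rw [triangleIncMatrix_mul_transpose_apply]
  obtain rfl | huw := eq_or_ne u w
  · simp
  · simp [hG.card_triangles_mem_mem_s7 huw, huw, apply_ite (Nat.cast : ℕ → R)]

end TriangleIncidence

/-- For a finite locally linear graph `G` on `n` vertices with `m` triangles which is
regular of degree `k`, `(x+3)^n ⬝ P_{A*}(x) = (x+3)^m ⬝ P_A(x + 3 - k/2)`. -/
theorem charpoly_triangleGraph_of_regular [Fintype V] [DecidableEq V]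
    (G : SimpleGraph V) [DecidableRel G.Adj] (k : ℕ)
    (hG : IsLocallyLinear G) (hreg : G.IsRegularOfDegree k) :
    (X + C 3) ^ (Fintype.card V) * ((TriangleGraph G).adjMatrix ℚ).charpoly =
      (X + C 3) ^ (Nat.card {t : Finset V // G.IsNClique 3 t}) *
        ((G.adjMatrix ℚ).charpoly.comp (X + C (3 - (k : ℚ) / 2))) := by
  set B := triangleIncMatrix ℚ G
  have hcard (v : V) : (#{t : {t : Finset V // G.IsNClique 3 t} | v ∈ t.1} : ℚ) = k / 2 := by
    rw [eq_div_iff two_ne_zero, mul_comm]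
    exact_mod_cast (hG.two_mul_card_triangles_mem_eq_degree v).trans (hreg v)
  have hA : G.adjMatrix ℚ = B * Bᵀ - scalar V ((k : ℚ) / 2) := by
    rw [show B * Bᵀ = _ from hG.triangleIncMatrix_mul_transpose, scalar_apply]
    simp only [hcard, add_sub_cancel_left]
  have hAstar : (TriangleGraph G).adjMatrix ℚ = Bᵀ * B - scalar _ 3 := by
    rw [show Bᵀ * B = _ from hG.transpose_mul_triangleIncMatrix, scalar_apply,
      add_sub_cancel_left]
  have hshift : (X + C ((k : ℚ) / 2)).comp (X + C (3 - (k : ℚ) / 2)) = X + C 3 := by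
    simp only [add_comp, X_comp, C_comp, add_assoc, ← C_add, sub_add_cancel]
  have hgram := congrArg (·.comp (X + C 3)) (charpoly_mul_comm' B Bᵀ)
  simp only [mul_comp, pow_comp, X_comp] at hgram
  rw [hA, hAstar, charpoly_sub_scalar, charpoly_sub_scalar, comp_assoc, hshift,
    Nat.card_eq_fintype_card]
  exact hgram.symm
end

section
/- Let G and H be finite simple locally linear graphs. If the triangle graph G* of G is isomorphic to the triangle graph H* of H, then G is isomorphic to H. That is, a locally linear graph is determined up to isomorphism by its triangle graph. -/
open SimpleGraph Polynomial Matrix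

variable {V : Type*}

/-!
In a locally linear graph two distinct triangles share at most one vertex, and three pairwise
intersecting triangles pass through a common vertex. So if a vertex `v` lies in at least two
triangles (is *shared*), an isomorphism `G* ≃ H*` carries the triangles through `v` exactly onto
the triangles through a unique shared vertex of `H`. Consequently a triangle and its image contain
equally many non-shared vertices; as these lie in no other triangle they can be matched
arbitrarily. The resulting bijection `V ≃ W` respects membership in triangles, hence adjacency.
-/

abbrev Triangle (G : SimpleGraph V) := {t : Finset V // G.IsNClique 3 t}

def IsShared (G : SimpleGraph V) (v : V) : Prop :=
  ∃ t₁ t₂ : Triangle G, t₁ ≠ t₂ ∧ v ∈ t₁.1 ∧ v ∈ t₂.1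

section

variable {W : Type*} {G : SimpleGraph V} {H : SimpleGraph W}

theorem mem_iff_eq_of_not_isShared {v : V} (hv : ¬IsShared G v) {t₀ : Triangle G}
    (ht₀ : v ∈ t₀.1) (t : Triangle G) : v ∈ t.1 ↔ t = t₀ := by
  refine ⟨fun ht => ?_, fun h => h ▸ ht₀⟩
  by_contra hne
  exact hv ⟨t, t₀, hne, ht, ht₀⟩

namespace IsLocallyLinear

theorem exists_mem (hG : IsLocallyLinear G) (v : V) : ∃ t : Triangle G, v ∈ t.1 := by
  obtain ⟨w, hvw⟩ := hG.1 v
  obtain ⟨t, ⟨ht, hv, -⟩, -⟩ := hG.2 hvw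
  exact ⟨⟨t, ht⟩, hv⟩

theorem adj_iff (hG : IsLocallyLinear G) {x y : V} :
    G.Adj x y ↔ x ≠ y ∧ ∃ t : Triangle G, x ∈ t.1 ∧ y ∈ t.1 := by
  refine ⟨fun h => ?_, fun ⟨hne, t, hx, hy⟩ => t.2.1 hx hy hne⟩
  obtain ⟨t, ⟨ht, hx, hy⟩, -⟩ := hG.2 h
  exact ⟨h.ne, ⟨t, ht⟩, hx, hy⟩

theorem eq_of_mem_of_mem_s13 (hG : IsLocallyLinear G) {t₁ t₂ : Triangle G} {x y : V} (hxy : x ≠ y)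
    (hx₁ : x ∈ t₁.1) (hy₁ : y ∈ t₁.1) (hx₂ : x ∈ t₂.1) (hy₂ : y ∈ t₂.1) : t₁ = t₂ := by
  obtain ⟨t, -, huniq⟩ := hG.2 (t₁.2.1 hx₁ hy₁ hxy)
  exact Subtype.ext <| (huniq _ ⟨t₁.2, hx₁, hy₁⟩).trans (huniq _ ⟨t₂.2, hx₂, hy₂⟩).symm

theorem eq_of_isShared (hG : IsLocallyLinear G) {v w : V} (hv : IsShared G v)
    (hw : ∀ t : Triangle G, v ∈ t.1 → w ∈ t.1) : w = v := by
  obtain ⟨t₁, t₂, hne, hv₁, hv₂⟩ := hv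
  by_contra hwv
  exact hne (hG.eq_of_mem_of_mem_s13 hwv (hw t₁ hv₁) hv₁ (hw t₂ hv₂) hv₂)

/-- Three pairwise intersecting triangles share a vertex: otherwise the three pairwise
intersection points would span a fourth triangle sharing an edge with each of them. -/
theorem mem_of_adj_of_adj_s13 (hG : IsLocallyLinear G) {t₁ t₂ t₃ : Triangle G} {x : V}
    (h₁₂ : (TriangleGraph G).Adj t₁ t₂) (h₁₃ : (TriangleGraph G).Adj t₁ t₃)
    (h₂₃ : (TriangleGraph G).Adj t₂ t₃) (hx₁ : x ∈ t₁.1) (hx₂ : x ∈ t₂.1) : x ∈ t₃.1 := by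
  classical
  obtain ⟨-, b, hb₁, hb₃⟩ := h₁₃
  obtain ⟨-, c, hc₂, hc₃⟩ := h₂₃
  by_cases hbx : b = x
  · exact hbx ▸ hb₃
  by_cases hcx : c = x
  · exact hcx ▸ hc₃
  exfalso
  by_cases hbc : b = c
  · exact h₁₂.1 (hG.eq_of_mem_of_mem_s13 hbx hb₁ hx₁ (hbc ▸ hc₂) hx₂)
  let s : Triangle G := ⟨{x, b, c}, is3Clique_triple_iff.mpr
    ⟨t₁.2.1 hx₁ hb₁ (Ne.symm hbx), t₂.2.1 hx₂ hc₂ (Ne.symm hcx), t₃.2.1 hb₃ hc₃ hbc⟩⟩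
  have hs : t₁ = s := hG.eq_of_mem_of_mem_s13 (Ne.symm hbx) hx₁ hb₁ (by simp [s]) (by simp [s])
  have hc₁ : c ∈ t₁.1 := hs ▸ by simp [s]
  exact h₁₂.1 (hG.eq_of_mem_of_mem_s13 hcx hc₁ hx₁ hc₂ hx₂)

end IsLocallyLinear

def Corresponds (f : Triangle G ≃ Triangle H) (v : V) (w : W) : Prop :=
  ∀ t, v ∈ t.1 ↔ w ∈ (f t).1

namespace Corresponds

variable {f : Triangle G ≃ Triangle H} {v v' : V} {w w' : W}

theorem symm (h : Corresponds f v w) : Corresponds f.symm w v := fun s => by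
  simpa using (h (f.symm s)).symm

theorem isShared (h : Corresponds f v w) (hv : IsShared G v) : IsShared H w := by
  obtain ⟨t₁, t₂, hne, hv₁, hv₂⟩ := hv
  exact ⟨f t₁, f t₂, f.injective.ne hne, (h t₁).1 hv₁, (h t₂).1 hv₂⟩

theorem isShared_iff (h : Corresponds f v w) : IsShared G v ↔ IsShared H w :=
  ⟨h.isShared, h.symm.isShared⟩

theorem right_unique (hH : IsLocallyLinear H) (hv : IsShared G v) (h : Corresponds f v w)
    (h' : Corresponds f v w') : w' = w :=
  hH.eq_of_isShared (h.isShared hv) fun s hs => (h'.symm s).2 ((h.symm s).1 hs)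

theorem left_unique (hG : IsLocallyLinear G) (hw : IsShared H w) (h : Corresponds f v w)
    (h' : Corresponds f v' w) : v' = v :=
  h.symm.right_unique hG hw h'.symm

end Corresponds

section Star

variable (f : TriangleGraph G ≃g TriangleGraph H)

theorem exists_forall_mem_map_of_isShared (hH : IsLocallyLinear H) {v : V} (hv : IsShared G v) :
    ∃ w, ∀ t : Triangle G, v ∈ t.1 → w ∈ (f t).1 := by
  obtain ⟨t₁, t₂, hne, hv₁, hv₂⟩ := hv
  have hadj : ∀ {s t : Triangle G}, s ≠ t → v ∈ s.1 → v ∈ t.1 → (TriangleGraph H).Adj (f s) (f t) :=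
    fun hst hs ht => f.map_adj_iff.mpr ⟨hst, v, hs, ht⟩
  obtain ⟨-, w, hw₁, hw₂⟩ := hadj hne hv₁ hv₂
  refine ⟨w, fun t ht => ?_⟩
  by_cases ht₁ : t = t₁
  · exact ht₁ ▸ hw₁
  by_cases ht₂ : t = t₂
  · exact ht₂ ▸ hw₂
  exact hH.mem_of_adj_of_adj_s13 (hadj hne hv₁ hv₂) (hadj (Ne.symm ht₁) hv₁ ht)
    (hadj (Ne.symm ht₂) hv₂ ht) hw₁ hw₂

theorem exists_corresponds (hG : IsLocallyLinear G) (hH : IsLocallyLinear H) {v : V}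
    (hv : IsShared G v) : ∃ w, Corresponds f.toEquiv v w := by
  obtain ⟨w, hw⟩ := exists_forall_mem_map_of_isShared f hH hv
  have hw_shared : IsShared H w := by
    obtain ⟨t₁, t₂, hne, hv₁, hv₂⟩ := hv
    exact ⟨f t₁, f t₂, f.injective.ne hne, hw t₁ hv₁, hw t₂ hv₂⟩
  obtain ⟨v', hv'⟩ := exists_forall_mem_map_of_isShared f.symm hG hw_shared
  have hv'v : v' = v := hG.eq_of_isShared hv fun t ht => by simpa using hv' (f t) (hw t ht)
  refine ⟨w, fun t => ⟨hw t, fun ht => ?_⟩⟩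
  simpa [hv'v] using hv' (f t) ht

end Star

section Matching

open scoped Classical Finset

theorem card_filter_isShared_eq {f : Triangle G ≃ Triangle H} (hG : IsLocallyLinear G)
    (hH : IsLocallyLinear H) (hσ : ∀ v, IsShared G v → ∃ w, Corresponds f v w)
    (hσ' : ∀ w, IsShared H w → ∃ v, Corresponds f v w) (t : Triangle G) :
    #{v ∈ t.1 | IsShared G v} = #{w ∈ (f t).1 | IsShared H w} := by
  refine Finset.card_bij (fun v hv => (hσ v (Finset.mem_filter.1 hv).2).choose) ?_ ?_ ?_
  · intro v hv
    obtain ⟨hvt, hv⟩ := Finset.mem_filter.1 hv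
    have h := (hσ v hv).choose_spec
    exact Finset.mem_filter.2 ⟨(h t).1 hvt, h.isShared hv⟩
  · intro v₁ hv₁ v₂ hv₂ heq
    have h₁ := (hσ v₁ (Finset.mem_filter.1 hv₁).2).choose_spec
    have h₂ := (hσ v₂ (Finset.mem_filter.1 hv₂).2).choose_spec
    rw [heq] at h₁
    exact h₂.left_unique hG (h₂.isShared (Finset.mem_filter.1 hv₂).2) h₁
  · intro w hw
    obtain ⟨hwt, hw⟩ := Finset.mem_filter.1 hw
    obtain ⟨v, hv⟩ := hσ' w hw
    have hv_shared := hv.isShared_iff.2 hw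
    exact ⟨v, Finset.mem_filter.2 ⟨(hv t).2 hwt, hv_shared⟩,
      hv.right_unique hH hv_shared (hσ v hv_shared).choose_spec⟩

theorem card_filter_not_isShared_eq {f : Triangle G ≃ Triangle H} (hG : IsLocallyLinear G)
    (hH : IsLocallyLinear H) (hσ : ∀ v, IsShared G v → ∃ w, Corresponds f v w)
    (hσ' : ∀ w, IsShared H w → ∃ v, Corresponds f v w) (t : Triangle G) :
    #{v ∈ t.1 | ¬IsShared G v} = #{w ∈ (f t).1 | ¬IsShared H w} := by
  have hG₃ := Finset.card_filter_add_card_filter_not (s := t.1) (fun v => IsShared G v)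
  have hH₃ := Finset.card_filter_add_card_filter_not (s := (f t).1) (fun w => IsShared H w)
  rw [t.2.card_eq] at hG₃
  rw [(f t).2.card_eq] at hH₃
  have := card_filter_isShared_eq hG hH hσ hσ' t
  omega

section VertexMatching

variable {f : Triangle G ≃ Triangle H} (hG : IsLocallyLinear G) (hH : IsLocallyLinear H)
  (hσ : ∀ v, IsShared G v → ∃ w, Corresponds f v w)
  (hσ' : ∀ w, IsShared H w → ∃ v, Corresponds f v w)

noncomputable def nonSharedEquiv (t : Triangle G) :
    {v // v ∈ {v ∈ t.1 | ¬IsShared G v}} ≃ {w // w ∈ {w ∈ (f t).1 | ¬IsShared H w}} :=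
  Finset.equivOfCardEq (card_filter_not_isShared_eq hG hH hσ hσ' t)

noncomputable def matchVertex (v : V) : W :=
  if hv : IsShared G v then (hσ v hv).choose
  else (nonSharedEquiv hG hH hσ hσ' (hG.exists_mem v).choose
    ⟨v, Finset.mem_filter.2 ⟨(hG.exists_mem v).choose_spec, hv⟩⟩).1

theorem matchVertex_of_not_isShared {v : V} (hv : ¬IsShared G v) {t : Triangle G}
    (ht : v ∈ t.1) :
    matchVertex hG hH hσ hσ' v =
      (nonSharedEquiv hG hH hσ hσ' t ⟨v, Finset.mem_filter.2 ⟨ht, hv⟩⟩).1 := by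
  obtain rfl := (mem_iff_eq_of_not_isShared hv ht _).1 (hG.exists_mem v).choose_spec
  rw [matchVertex, dif_neg hv]

theorem corresponds_matchVertex (v : V) : Corresponds f v (matchVertex hG hH hσ hσ' v) := by
  by_cases hv : IsShared G v
  · rw [matchVertex, dif_pos hv]
    exact (hσ v hv).choose_spec
  obtain ⟨t, ht⟩ := hG.exists_mem v
  have hw := Finset.mem_filter.1 (nonSharedEquiv hG hH hσ hσ' t
    ⟨v, Finset.mem_filter.2 ⟨ht, hv⟩⟩).2
  rw [← matchVertex_of_not_isShared hG hH hσ hσ' hv ht] at hw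
  intro s
  rw [mem_iff_eq_of_not_isShared hv ht s, mem_iff_eq_of_not_isShared hw.2 hw.1 (f s),
    f.injective.eq_iff]

theorem matchVertex_injective : Function.Injective (matchVertex hG hH hσ hσ') := by
  intro a b hab
  have ha := corresponds_matchVertex hG hH hσ hσ' a
  have hb := corresponds_matchVertex hG hH hσ hσ' b
  rw [hab] at ha
  by_cases ha_shared : IsShared G a
  · exact hb.left_unique hG (ha.isShared ha_shared) ha
  by_cases hb_shared : IsShared G b
  · exact hb.left_unique hG (hb.isShared hb_shared) ha
  obtain ⟨t, hat⟩ := hG.exists_mem a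
  have hbt : b ∈ t.1 := (hb t).2 ((ha t).1 hat)
  rw [matchVertex_of_not_isShared hG hH hσ hσ' ha_shared hat,
    matchVertex_of_not_isShared hG hH hσ hσ' hb_shared hbt] at hab
  exact congrArg Subtype.val ((nonSharedEquiv hG hH hσ hσ' t).injective (Subtype.ext hab))

theorem matchVertex_surjective : Function.Surjective (matchVertex hG hH hσ hσ') := by
  intro w
  by_cases hw : IsShared H w
  · obtain ⟨v, hv⟩ := hσ' w hw
    exact ⟨v, hv.right_unique hH (hv.isShared_iff.2 hw) (corresponds_matchVertex hG hH hσ hσ' v)⟩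
  obtain ⟨s, hws⟩ := hH.exists_mem w
  have hw' : w ∈ {w ∈ (f (f.symm s)).1 | ¬IsShared H w} := by simpa using ⟨hws, hw⟩
  obtain ⟨⟨v, hv⟩, hvw⟩ := (nonSharedEquiv hG hH hσ hσ' (f.symm s)).surjective ⟨w, hw'⟩
  obtain ⟨hvt, hv_shared⟩ := Finset.mem_filter.1 hv
  exact ⟨v, by rw [matchVertex_of_not_isShared hG hH hσ hσ' hv_shared hvt, hvw]⟩

end VertexMatching

theorem exists_equiv_corresponds {f : Triangle G ≃ Triangle H} (hG : IsLocallyLinear G)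
    (hH : IsLocallyLinear H) (hσ : ∀ v, IsShared G v → ∃ w, Corresponds f v w)
    (hσ' : ∀ w, IsShared H w → ∃ v, Corresponds f v w) :
    ∃ φ : V ≃ W, ∀ v, Corresponds f v (φ v) :=
  ⟨.ofBijective _ ⟨matchVertex_injective hG hH hσ hσ', matchVertex_surjective hG hH hσ hσ'⟩,
    corresponds_matchVertex hG hH hσ hσ'⟩

end Matching

def isoOfCorresponds (hG : IsLocallyLinear G) (hH : IsLocallyLinear H)
    {f : Triangle G ≃ Triangle H} (φ : V ≃ W) (hφ : ∀ v, Corresponds f v (φ v)) : G ≃g H where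
  toEquiv := φ
  map_rel_iff' {a b} := by
    rw [hH.adj_iff, hG.adj_iff, φ.injective.ne_iff, f.surjective.exists]
    simp only [← hφ _ _]

end

theorem locallyLinear_determined_by_triangleGraph_general {W : Type*}
    (G : SimpleGraph V) (H : SimpleGraph W)
    (hG : IsLocallyLinear G) (hH : IsLocallyLinear H)
    (h : Nonempty (TriangleGraph G ≃g TriangleGraph H)) :
    Nonempty (G ≃g H) := by
  obtain ⟨f⟩ := h
  obtain ⟨φ, hφ⟩ := exists_equiv_corresponds hG hH (fun _ => exists_corresponds f hG hH)
    fun _ hw => (exists_corresponds f.symm hH hG hw).imp fun _ hv => hv.symm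
  exact ⟨isoOfCorresponds hG hH φ hφ⟩

/-- A finite locally linear graph is determined up to isomorphism by its triangle
graph: if the triangle graphs of `G` and `H` are isomorphic then so are `G` and `H`. -/
theorem locallyLinear_determined_by_triangleGraph {W : Type*} [Fintype V] [Fintype W]
    (G : SimpleGraph V) (H : SimpleGraph W)
    (hG : IsLocallyLinear G) (hH : IsLocallyLinear H)
    (h : Nonempty (TriangleGraph G ≃g TriangleGraph H)) :
    Nonempty (G ≃g H) :=
  locallyLinear_determined_by_triangleGraph_general G H hG hH h
end

section
/- A finite simple graph G with no isolated vertices satisfies the property that for every vertex v the subgraph induced on the neighborhood of v is 1-regular if and only if every edge of G belongs to exactly one triangle of G. -/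
open SimpleGraph Polynomial Matrix

variable {V : Type*}

/-! The triangles through an edge `xy` are exactly the sets `{x, y, z}` with `z` a common
neighbour of `x` and `y`, and distinct such `z` give distinct triangles. So `xy` lies in exactly
one triangle iff `y` has exactly one neighbour inside `N(x)`, i.e. degree one in `G[N(x)]`. -/

namespace SimpleGraph

variable {G : SimpleGraph V}

theorem isRegularOfDegree_one_iff [G.LocallyFinite] :
    G.IsRegularOfDegree 1 ↔ ∀ v, ∃! w, G.Adj v w :=
  forall_congr' fun _ => degree_eq_one_iff_existsUnique_adj

theorem induce_isRegularOfDegree_one_iff {s : Set V} [(G.induce s).LocallyFinite] :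
    (G.induce s).IsRegularOfDegree 1 ↔ ∀ y ∈ s, ∃! z, z ∈ s ∧ G.Adj y z := by
  simp only [isRegularOfDegree_one_iff, Subtype.forall, comap_adj,
    Function.Embedding.subtype_apply]
  refine forall₂_congr fun y _ => ⟨?_, ?_⟩
  · rintro ⟨⟨z, hz⟩, hyz, huniq⟩
    exact ⟨z, ⟨hz, hyz⟩, fun w hw => congrArg Subtype.val (huniq ⟨w, hw.1⟩ hw.2)⟩
  · rintro ⟨z, ⟨hz, hyz⟩, huniq⟩
    exact ⟨⟨z, hz⟩, hyz, fun w hw => Subtype.ext (huniq w ⟨w.2, hw⟩)⟩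

theorem is3Clique_and_mem_and_mem_iff [DecidableEq V] {t : Finset V} {x y : V}
    (hxy : G.Adj x y) :
    G.IsNClique 3 t ∧ x ∈ t ∧ y ∈ t ↔ ∃ z, G.Adj x z ∧ G.Adj y z ∧ t = {x, y, z} := by
  constructor
  · rintro ⟨ht, hx, hy⟩
    have hxyt : {x, y} ⊆ t := Finset.insert_subset hx (Finset.singleton_subset_iff.2 hy)
    obtain ⟨z, hz⟩ : ∃ z, t \ {x, y} = {z} := Finset.card_eq_one.1 <| by
      rw [Finset.card_sdiff_of_subset hxyt, ht.card_eq, Finset.card_pair hxy.ne]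
    have htxyz : t = {x, y, z} := by
      rw [← Finset.union_sdiff_of_subset hxyt, hz, Finset.insert_union, Finset.singleton_union]
    obtain ⟨-, hxz, hyz⟩ := is3Clique_triple_iff.1 (htxyz ▸ ht)
    exact ⟨z, hxz, hyz, htxyz⟩
  · rintro ⟨z, hxz, hyz, rfl⟩
    exact ⟨is3Clique_triple_iff.2 ⟨hxy, hxz, hyz⟩, by simp, by simp⟩

theorem existsUnique_is3Clique_iff [DecidableEq V] {x y : V} (hxy : G.Adj x y) :
    (∃! t : Finset V, G.IsNClique 3 t ∧ x ∈ t ∧ y ∈ t) ↔ ∃! z, G.Adj x z ∧ G.Adj y z := by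
  simp only [is3Clique_and_mem_and_mem_iff hxy]
  constructor
  · rintro ⟨_, ⟨z, hxz, hyz, rfl⟩, huniq⟩
    refine ⟨z, ⟨hxz, hyz⟩, fun w ⟨hxw, hyw⟩ => ?_⟩
    have hw : w ∈ ({x, y, z} : Finset V) := huniq {x, y, w} ⟨w, hxw, hyw, rfl⟩ ▸ by simp
    grind [G.ne_of_adj hxw, G.ne_of_adj hyw]
  · rintro ⟨z, ⟨hxz, hyz⟩, huniq⟩
    refine ⟨{x, y, z}, ⟨z, hxz, hyz, rfl⟩, ?_⟩
    rintro _ ⟨w, hxw, hyw, rfl⟩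
    rw [huniq w ⟨hxw, hyw⟩]

end SimpleGraph

theorem locallyLinear_iff_general [Fintype V] (G : SimpleGraph V) [DecidableRel G.Adj] :
    (∀ v : V, (G.induce (G.neighborSet v)).IsRegularOfDegree 1) ↔
      (∀ ⦃x y : V⦄, G.Adj x y → ∃! t : Finset V, G.IsNClique 3 t ∧ x ∈ t ∧ y ∈ t) := by
  classical
  simp only [induce_isRegularOfDegree_one_iff, mem_neighborSet]
  exact forall₂_congr fun x y => forall_congr' fun hxy => (existsUnique_is3Clique_iff hxy).symm

/-- For a finite graph with no isolated vertices, every neighborhood induces a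
1-regular graph iff every edge lies in exactly one triangle. -/
theorem locallyLinear_iff [Fintype V] (G : SimpleGraph V) [DecidableRel G.Adj]
    (hiso : ∀ v : V, ∃ w : V, G.Adj v w) :
    (∀ v : V, (G.induce (G.neighborSet v)).IsRegularOfDegree 1) ↔
      (∀ ⦃x y : V⦄, G.Adj x y → ∃! t : Finset V, G.IsNClique 3 t ∧ x ∈ t ∧ y ∈ t) :=
  locallyLinear_iff_general G
end

section
/- Let G be a finite simple locally linear graph. If q = (v₁, v₂, v₃, v₄) is an induced 4-cycle in G, then each of the four edges of q lies in a distinct triangle of G, and these four triangles, in cyclic order, form an induced 4-cycle in the triangle graph G*: consecutive triangles share a vertex of q, while opposite triangles share no vertex. -/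
open SimpleGraph Polynomial Matrix

variable {V : Type*}

/-! Local linearity says exactly that an edge has a single common neighbour. If a vertex `v`
lay in the triangle on `v₁v₂` and in the triangle on `v₃v₄`, then, the quadrilateral being
induced, `v` would differ from and be adjacent to `v₁`, `v₂` and `v₃`; so `v₁` and `v₃` would be
two common neighbours of the edge `vv₂`. That consecutive triangles differ is immediate, as no
triangle contains two distinct non-adjacent vertices. -/

namespace SimpleGraph.IsNClique

variable {G : SimpleGraph V} {n : ℕ} {t : Finset V} {a b : V}

theorem notMem_of_not_adj (ht : G.IsNClique n t) (hb : b ∈ t) (hab : a ≠ b)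
    (h : ¬G.Adj a b) : a ∉ t :=
  fun ha => h (ht.isClique ha hb hab)

end SimpleGraph.IsNClique

namespace IsLocallyLinear

variable {G : SimpleGraph V}

theorem subsingleton_commonNeighbors (hG : IsLocallyLinear G) {x y : V} (h : G.Adj x y) :
    (G.commonNeighbors x y).Subsingleton := by
  classical
  intro z hz w hw
  rw [mem_commonNeighbors] at hz hw
  have hxyz : G.IsNClique 3 {x, y, z} := is3Clique_triple_iff.2 ⟨h, hz.1, hz.2⟩
  have hxyw : G.IsNClique 3 {x, y, w} := is3Clique_triple_iff.2 ⟨h, hw.1, hw.2⟩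
  have hw_mem : w ∈ ({x, y, z} : Finset V) := by
    rw [(hG.2 h).unique ⟨hxyz, by simp, by simp⟩ ⟨hxyw, by simp, by simp⟩]
    simp
  simp only [Finset.mem_insert, Finset.mem_singleton] at hw_mem
  rcases hw_mem with rfl | rfl | rfl
  · exact (hw.1.ne rfl).elim
  · exact (hw.2.ne rfl).elim
  · rfl

theorem disjoint_of_opposite_edges (hG : IsLocallyLinear G) {a b c d : V} {t s : Finset V}
    (ht : G.IsNClique 3 t) (hs : G.IsNClique 3 s) (ha : a ∈ t) (hb : b ∈ t) (hc : c ∈ s)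
    (hd : d ∈ s) (hab : G.Adj a b) (hbc : G.Adj b c) (hac : a ≠ c) (hac' : ¬G.Adj a c)
    (hbd : b ≠ d) (hbd' : ¬G.Adj b d) : Disjoint t s := by
  rw [Finset.disjoint_left]
  intro v hvt hvs
  have hva : v ≠ a := by rintro rfl; exact hs.notMem_of_not_adj hc hac hac' hvs
  have hvb : v ≠ b := by rintro rfl; exact hs.notMem_of_not_adj hd hbd hbd' hvs
  have hvc : v ≠ c := by
    rintro rfl; exact ht.notMem_of_not_adj ha hac.symm (fun h => hac' h.symm) hvt
  have hvb_adj : G.Adj v b := ht.isClique hvt hb hvb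
  exact hac <| hG.subsingleton_commonNeighbors hvb_adj
    ⟨ht.isClique hvt ha hva, hab.symm⟩ ⟨hs.isClique hvs hc hvc, hbc⟩

end IsLocallyLinear

theorem quadrilateral_to_triangleGraph_general (G : SimpleGraph V)
    (hG : IsLocallyLinear G) (v₁ v₂ v₃ v₄ : V)
    (d13 : v₁ ≠ v₃) (d24 : v₂ ≠ v₄)
    (a12 : G.Adj v₁ v₂) (a23 : G.Adj v₂ v₃) (a34 : G.Adj v₃ v₄) (a41 : G.Adj v₄ v₁)
    (n13 : ¬ G.Adj v₁ v₃) (n24 : ¬ G.Adj v₂ v₄) :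
    ∃ t₁ t₂ t₃ t₄ : {t : Finset V // G.IsNClique 3 t},
      (v₁ ∈ t₁.1 ∧ v₂ ∈ t₁.1) ∧ (v₂ ∈ t₂.1 ∧ v₃ ∈ t₂.1) ∧
      (v₃ ∈ t₃.1 ∧ v₄ ∈ t₃.1) ∧ (v₄ ∈ t₄.1 ∧ v₁ ∈ t₄.1) ∧
      t₁ ≠ t₂ ∧ t₁ ≠ t₃ ∧ t₁ ≠ t₄ ∧ t₂ ≠ t₃ ∧ t₂ ≠ t₄ ∧ t₃ ≠ t₄ ∧
      (TriangleGraph G).Adj t₁ t₂ ∧ (TriangleGraph G).Adj t₂ t₃ ∧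
      (TriangleGraph G).Adj t₃ t₄ ∧ (TriangleGraph G).Adj t₄ t₁ ∧
      (∀ v : V, ¬ (v ∈ t₁.1 ∧ v ∈ t₃.1)) ∧ (∀ v : V, ¬ (v ∈ t₂.1 ∧ v ∈ t₄.1)) := by
  have n31 : ¬G.Adj v₃ v₁ := fun h => n13 h.symm
  obtain ⟨t₁, ⟨ht₁, h₁₁, h₁₂⟩, -⟩ := hG.2 a12
  obtain ⟨t₂, ⟨ht₂, h₂₂, h₂₃⟩, -⟩ := hG.2 a23
  obtain ⟨t₃, ⟨ht₃, h₃₃, h₃₄⟩, -⟩ := hG.2 a34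
  obtain ⟨t₄, ⟨ht₄, h₄₄, h₄₁⟩, -⟩ := hG.2 a41
  have disj₁₃ := hG.disjoint_of_opposite_edges ht₁ ht₃ h₁₁ h₁₂ h₃₃ h₃₄ a12 a23 d13 n13 d24 n24
  have disj₂₄ :=
    hG.disjoint_of_opposite_edges ht₂ ht₄ h₂₂ h₂₃ h₄₄ h₄₁ a23 a34 d24 n24 d13.symm n31
  have ne₁₂ : t₁ ≠ t₂ := ne_of_mem_of_not_mem' h₁₁ (ht₂.notMem_of_not_adj h₂₃ d13 n13)
  have ne₁₃ : t₁ ≠ t₃ := ne_of_mem_of_not_mem' h₁₁ (Finset.disjoint_left.1 disj₁₃ h₁₁)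
  have ne₁₄ : t₁ ≠ t₄ := ne_of_mem_of_not_mem' h₁₂ (ht₄.notMem_of_not_adj h₄₄ d24 n24)
  have ne₂₃ : t₂ ≠ t₃ := ne_of_mem_of_not_mem' h₂₂ (ht₃.notMem_of_not_adj h₃₄ d24 n24)
  have ne₂₄ : t₂ ≠ t₄ := ne_of_mem_of_not_mem' h₂₂ (Finset.disjoint_left.1 disj₂₄ h₂₂)
  have ne₃₄ : t₃ ≠ t₄ := ne_of_mem_of_not_mem' h₃₃ (ht₄.notMem_of_not_adj h₄₁ d13.symm n31)
  refine ⟨⟨t₁, ht₁⟩, ⟨t₂, ht₂⟩, ⟨t₃, ht₃⟩, ⟨t₄, ht₄⟩, ⟨h₁₁, h₁₂⟩, ⟨h₂₂, h₂₃⟩, ⟨h₃₃, h₃₄⟩,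
    ⟨h₄₄, h₄₁⟩, ?_⟩
  simp only [ne_eq, Subtype.mk.injEq, TriangleGraph]
  exact ⟨ne₁₂, ne₁₃, ne₁₄, ne₂₃, ne₂₄, ne₃₄, ⟨ne₁₂, v₂, h₁₂, h₂₂⟩, ⟨ne₂₃, v₃, h₂₃, h₃₃⟩,
    ⟨ne₃₄, v₄, h₃₄, h₄₄⟩, ⟨Ne.symm ne₁₄, v₁, h₄₁, h₁₁⟩,
    fun v hv => Finset.disjoint_left.1 disj₁₃ hv.1 hv.2,
    fun v hv => Finset.disjoint_left.1 disj₂₄ hv.1 hv.2⟩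

/-- The four edges of an induced 4-cycle of a finite locally linear graph lie in four
pairwise distinct triangles which form an induced 4-cycle in the triangle graph:
consecutive triangles share a vertex of the quadrilateral, while opposite triangles
share no vertex. -/
theorem quadrilateral_to_triangleGraph [Fintype V] (G : SimpleGraph V)
    (hG : IsLocallyLinear G) (v₁ v₂ v₃ v₄ : V)
    (d12 : v₁ ≠ v₂) (d13 : v₁ ≠ v₃) (d14 : v₁ ≠ v₄)
    (d23 : v₂ ≠ v₃) (d24 : v₂ ≠ v₄) (d34 : v₃ ≠ v₄)
    (a12 : G.Adj v₁ v₂) (a23 : G.Adj v₂ v₃) (a34 : G.Adj v₃ v₄) (a41 : G.Adj v₄ v₁)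
    (n13 : ¬ G.Adj v₁ v₃) (n24 : ¬ G.Adj v₂ v₄) :
    ∃ t₁ t₂ t₃ t₄ : {t : Finset V // G.IsNClique 3 t},
      (v₁ ∈ t₁.1 ∧ v₂ ∈ t₁.1) ∧ (v₂ ∈ t₂.1 ∧ v₃ ∈ t₂.1) ∧
      (v₃ ∈ t₃.1 ∧ v₄ ∈ t₃.1) ∧ (v₄ ∈ t₄.1 ∧ v₁ ∈ t₄.1) ∧
      t₁ ≠ t₂ ∧ t₁ ≠ t₃ ∧ t₁ ≠ t₄ ∧ t₂ ≠ t₃ ∧ t₂ ≠ t₄ ∧ t₃ ≠ t₄ ∧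
      (TriangleGraph G).Adj t₁ t₂ ∧ (TriangleGraph G).Adj t₂ t₃ ∧
      (TriangleGraph G).Adj t₃ t₄ ∧ (TriangleGraph G).Adj t₄ t₁ ∧
      (∀ v : V, ¬ (v ∈ t₁.1 ∧ v ∈ t₃.1)) ∧ (∀ v : V, ¬ (v ∈ t₂.1 ∧ v ∈ t₄.1)) :=
  quadrilateral_to_triangleGraph_general G hG v₁ v₂ v₃ v₄ d13 d24 a12 a23 a34 a41 n13 n24
end
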